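/- (Goodwyn's variational inequality) Let X be a compact metric space, f : X → X a homeomorphism, and μ an f-invariant Borel probability measure on X. Then h_μ(f) ≤ h_top(f). -/

import Mathlib

open Filter MeasureTheory Set Topology
open scoped ENNReal NNReal

noncomputable section

/-- The entropy at time `n` of the finite measurable partition of `X` given by a map
`P : X → Fin m`, with respect to the dynamics `f`:
`−Σ_w μ(X_w) log μ(X_w)`, the sum being over all itineraries `w : Fin n → Fin m`,
where `X_w` is the set of points whose itinerary is `w`. -/
def partitionDynEntropy {X : Type*} [MeasurableSpace X] (μ : Measure X) (f : X → X)
    {m : ℕ} (P : X → Fin m) (n : ℕ) : ℝ :=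
  -∑ w : Fin n → Fin m,
      (μ {x | ∀ i : Fin n, P (f^[(i : ℕ)] x) = w i}).toReal *
        Real.log (μ {x | ∀ i : Fin n, P (f^[(i : ℕ)] x) = w i}).toReal

/-- The Kolmogorov–Sinai (metric) entropy of `f` with respect to `μ`: the supremum over
all finite measurable partitions of the asymptotic exponential rate of the partition
entropies. -/
def kolmogorovSinaiEntropy {X : Type*} [MeasurableSpace X] (μ : Measure X) (f : X → X) :
    EReal :=
  ⨆ (m : ℕ) (P : {P : X → Fin m // Measurable P}),
    Filter.atTop.liminf fun n : ℕ => ((partitionDynEntropy μ f P.1 n / n : ℝ) : EReal)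

/-- The minimal cardinality of a subcover of the `n`-th dynamical refinement
`𝒰 ∨ f⁻¹𝒰 ∨ … ∨ f^{-(n-1)}𝒰` of the cover `U`. -/
def coverMinCard {X : Type*} (f : X → X) {k : ℕ} (U : Fin k → Set X) (n : ℕ) : ℕ :=
  sInf {m | ∃ S : Finset (Fin n → Fin k), S.card = m ∧
    (Set.univ : Set X) ⊆ ⋃ w ∈ S, ⋂ i : Fin n, f^[(i : ℕ)] ⁻¹' U (w i)}

/-- The topological entropy of `f`: the supremum over finite open covers `𝒰` of the
exponential growth rate of the minimal cardinality of subcovers of the dynamical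
refinements of `𝒰`. -/
def topEntropy {X : Type*} [TopologicalSpace X] (f : X → X) : EReal :=
  ⨆ (k : ℕ)
    (U : {U : Fin k → Set X // (∀ i, IsOpen (U i)) ∧ ⋃ i, U i = Set.univ}),
    Filter.atTop.liminf fun n : ℕ =>
      ((Real.log (coverMinCard f U.1 n) / n : ℝ) : EReal)

end

/-!
Fix a measurable partition `P = {P₁, …, Pₘ}` and `δ > 0`. By regularity there are closed
`Bⱼ ⊆ Pⱼ` leaving out a set `B₀` of measure at most `ε²`; the sets `B₀ ∪ Bⱼ` form an open cover `𝒰`.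
Refine `P` by recording whether a point lies in `B₀`. A cell of the `n`-th join of this refinement
meets a cylinder of a minimal subcover of `𝒰ⁿ`, and that cylinder determines the cell's itinerary
except at the times spent in `B₀`. By Markov's inequality and invariance, the cells spending more
than `εn` times in `B₀` have total mass at most `ε`; the others fall into `N(𝒰ⁿ)` groups of at most
`θ^(εn) (1 + m/θ)^n` cells each. The grouping bound `H ≤ log #groups + Σₖ qₖ log #groupₖ` gives
`H(Pⁿ) ≤ log N(𝒰ⁿ) + log 2 + n (ε log θ + log (1 + m/θ) + ε log 2m)`, and choosing `θ` large and
`ε` small makes the rate of `P` exceed that of `𝒰` by at most `δ`.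
-/

open Real
open scoped Finset

namespace Real

theorem sum_negMulLog_le {ι : Type*} (t : Finset ι) {p : ι → ℝ} (hp : ∀ i ∈ t, 0 ≤ p i) :
    ∑ i ∈ t, negMulLog (p i) ≤
      negMulLog (∑ i ∈ t, p i) + (∑ i ∈ t, p i) * log t.card := by
  rcases t.eq_empty_or_nonempty with rfl | ht
  · simp
  have hc : (0 : ℝ) < t.card := by exact_mod_cast ht.card_pos
  have hJ := concaveOn_negMulLog.le_map_sum (t := t) (w := fun _ => (t.card : ℝ)⁻¹)
    (p := p) (fun _ _ => by positivity) (by simp [hc.ne']) hp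
  simp only [smul_eq_mul, ← Finset.mul_sum] at hJ
  rw [mul_comm, negMulLog_mul, negMulLog, log_inv] at hJ
  have := mul_le_mul_of_nonneg_left hJ hc.le
  field_simp at this
  linarith

theorem negMulLog_sum_le {ι : Type*} (t : Finset ι) {p : ι → ℝ} (hp : ∀ i ∈ t, 0 ≤ p i) :
    negMulLog (∑ i ∈ t, p i) ≤ ∑ i ∈ t, negMulLog (p i) := by
  rw [negMulLog, neg_mul, Finset.sum_mul, ← Finset.sum_neg_distrib]
  refine Finset.sum_le_sum fun i hi => ?_
  rcases (hp i hi).eq_or_lt with h | h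
  · simp [← h]
  · have := log_le_log h (Finset.single_le_sum hp hi)
    rw [negMulLog]
    nlinarith

end Real

theorem EReal.le_of_forall_pos_le_add {x y : EReal} (h : ∀ δ : ℝ, 0 < δ → x ≤ y + δ) : x ≤ y := by
  refine EReal.le_of_forall_lt_iff_le.1 fun z hz => ?_
  induction y using EReal.rec with
  | bot =>
      have := h 1 one_pos
      rw [EReal.bot_add, le_bot_iff] at this
      simp [this]
  | coe y =>
      have := h (z - y) (_root_.sub_pos.2 (EReal.coe_lt_coe_iff.1 hz))
      rwa [← EReal.coe_add, add_sub_cancel] at this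
  | top => simp at hz

section Counting

variable {ι α : Type*} [Fintype ι]

theorem card_filter_card_isSome_le [Fintype α] [DecidableEq ι] (s : ℕ) {θ : ℝ} (hθ : 1 ≤ θ) :
    (#{g : ι → Option α | #{i | (g i).isSome} ≤ s} : ℝ) ≤
      θ ^ s * (1 + Fintype.card α / θ) ^ Fintype.card ι := by
  have hθ0 : 0 < θ := zero_lt_one.trans_le hθ
  -- bound the indicator of `#{i | (g i).isSome} ≤ s` by `θ ^ (s - #{i | (g i).isSome})`,
  -- which factorizes over `i`
  have hweight : ∀ g : ι → Option α, #{i | (g i).isSome} ≤ s →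
      (1 : ℝ) ≤ θ ^ s * ∏ i, (if (g i).isSome then θ⁻¹ else 1) := by
    intro g hg
    rw [Finset.prod_ite, Finset.prod_const, Finset.prod_const_one, mul_one, inv_pow,
      ← div_eq_mul_inv, one_le_div (by positivity)]
    exact pow_le_pow_right₀ hθ hg
  calc (#{g : ι → Option α | #{i | (g i).isSome} ≤ s} : ℝ)
      = ∑ g : ι → Option α, if #{i | (g i).isSome} ≤ s then 1 else 0 := by
        rw [Finset.sum_boole]
    _ ≤ ∑ g : ι → Option α, θ ^ s * ∏ i, (if (g i).isSome then θ⁻¹ else 1) := by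
        refine Finset.sum_le_sum fun g _ => ?_
        split_ifs with hg
        · exact hweight g hg
        · positivity
    _ = θ ^ s * (1 + Fintype.card α / θ) ^ Fintype.card ι := by
        rw [← Finset.mul_sum,
          ← Fintype.prod_sum fun (_ : ι) (o : Option α) => if o.isSome then θ⁻¹ else 1]
        simp [Fintype.sum_option, div_eq_mul_inv]

def AgreesUpTo (s : ℕ) (w : ι → α) (v : ι → α × Bool) : Prop :=
  (∀ i, (v i).2 = true → (v i).1 = w i) ∧ #{i | (v i).2 = false} ≤ s

instance [DecidableEq α] (s : ℕ) (w : ι → α) : DecidablePred (AgreesUpTo s w) :=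
  fun _ => by unfold AgreesUpTo; infer_instance

theorem card_filter_agreesUpTo_le [Fintype α] [DecidableEq ι] [DecidableEq α] (s : ℕ)
    (w : ι → α) {θ : ℝ} (hθ : 1 ≤ θ) :
    (#{v | AgreesUpTo s w v} : ℝ) ≤ θ ^ s * (1 + Fintype.card α / θ) ^ Fintype.card ι := by
  refine le_trans ?_ (card_filter_card_isSome_le s hθ)
  -- an agreeing `v` is determined by its entries at the positions flagged `false`
  refine Nat.cast_le.2 (Finset.card_le_card_of_injOn
    (fun v i => if (v i).2 then none else some (v i).1) (fun v hv => ?_) (fun v hv v' hv' h => ?_))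
  · simp only [Finset.coe_filter, Finset.mem_univ, true_and, Set.mem_ofPred_eq] at hv ⊢
    convert hv.2 using 3
    split_ifs <;> simp_all
  · simp only [Finset.coe_filter, Finset.mem_univ, true_and, Set.mem_ofPred_eq] at hv hv'
    funext i
    have hi := congrFun h i
    cases hb : (v i).2 <;> cases hb' : (v' i).2 <;> simp_all [Prod.ext_iff, AgreesUpTo]

open Classical in
noncomputable def assignAgreeing (S : Finset (ι → α)) (s : ℕ) (v : ι → α × Bool) : Option S :=
  if h : ∃ w ∈ S, AgreesUpTo s w v then some ⟨h.choose, h.choose_spec.1⟩ else none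

theorem agreesUpTo_of_assignAgreeing_eq_some {S : Finset (ι → α)} {s : ℕ} {v : ι → α × Bool}
    {w : S} (h : assignAgreeing S s v = some w) : AgreesUpTo s w v := by
  unfold assignAgreeing at h
  split_ifs at h with hv
  cases h
  exact hv.choose_spec.2

theorem assignAgreeing_ne_none {S : Finset (ι → α)} {s : ℕ} {v : ι → α × Bool} {w : ι → α}
    (hw : w ∈ S) (hv : AgreesUpTo s w v) : assignAgreeing S s v ≠ none := by
  rw [assignAgreeing, dif_pos ⟨w, hw, hv⟩]
  exact Option.some_ne_none _

theorem card_filter_assignAgreeing_eq_some_le [Fintype α] [DecidableEq ι] [DecidableEq α]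
    (S : Finset (ι → α)) (s : ℕ) (w : S) {θ : ℝ} (hθ : 1 ≤ θ) :
    (#{v | assignAgreeing S s v = some w} : ℝ) ≤
      θ ^ s * (1 + Fintype.card α / θ) ^ Fintype.card ι := by
  refine le_trans (Nat.cast_le.2 (Finset.card_le_card fun v hv => ?_))
    (card_filter_agreesUpTo_le s w hθ)
  simp only [Finset.mem_filter, Finset.mem_univ, true_and] at hv ⊢
  exact agreesUpTo_of_assignAgreeing_eq_some hv

end Counting

section PartitionEntropy

variable {X ι κ : Type*} [MeasurableSpace X] [Fintype ι]

noncomputable def partitionEntropy (μ : Measure X) (T : X → ι) : ℝ :=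
  ∑ i, negMulLog (μ.real (T ⁻¹' {i}))

variable {μ : Measure X} {T : X → ι}

theorem measurableSet_preimage_comp_singleton (hT : ∀ i, MeasurableSet (T ⁻¹' {i}))
    (g : ι → κ) (k : κ) : MeasurableSet ((g ∘ T) ⁻¹' {k}) := by
  rw [Set.preimage_comp, ← Set.biUnion_preimage_singleton]
  exact .biUnion (Set.to_countable _) fun i _ => hT i

theorem measureReal_preimage_comp_singleton [DecidableEq κ] [IsFiniteMeasure μ]
    (hT : ∀ i, MeasurableSet (T ⁻¹' {i})) (g : ι → κ) (k : κ) :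
    μ.real ((g ∘ T) ⁻¹' {k}) = ∑ i with g i = k, μ.real (T ⁻¹' {i}) := by
  rw [sum_measureReal_preimage_singleton _ fun i _ => hT i]
  congr 1
  ext x
  simp

theorem partitionEntropy_comp_le [Fintype κ] [DecidableEq κ] [IsFiniteMeasure μ]
    (hT : ∀ i, MeasurableSet (T ⁻¹' {i})) (g : ι → κ) :
    partitionEntropy μ (g ∘ T) ≤ partitionEntropy μ T := by
  rw [partitionEntropy, partitionEntropy, ← Finset.sum_fiberwise Finset.univ g]
  gcongr with k
  rw [measureReal_preimage_comp_singleton hT]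
  exact negMulLog_sum_le _ fun _ _ => measureReal_nonneg

theorem sum_measureReal_preimage_singleton_eq_one [IsProbabilityMeasure μ]
    (hT : ∀ i, MeasurableSet (T ⁻¹' {i})) : ∑ i, μ.real (T ⁻¹' {i}) = 1 := by
  rw [sum_measureReal_preimage_singleton _ fun i _ => hT i, Finset.coe_univ, Set.preimage_univ,
    probReal_univ]

theorem partitionEntropy_le_log_card [IsProbabilityMeasure μ]
    (hT : ∀ i, MeasurableSet (T ⁻¹' {i})) : partitionEntropy μ T ≤ log (Fintype.card ι) := by
  have := sum_negMulLog_le Finset.univ fun i _ => measureReal_nonneg (μ := μ) (s := T ⁻¹' {i})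
  rwa [sum_measureReal_preimage_singleton_eq_one hT, negMulLog_one, one_mul, zero_add,
    Finset.card_univ] at this

theorem partitionEntropy_le_of_card_fiber_le [Fintype κ] [DecidableEq κ] [IsProbabilityMeasure μ]
    (hT : ∀ i, MeasurableSet (T ⁻¹' {i})) (γ : ι → κ) {C : κ → ℝ} (hC : ∀ k, 1 ≤ C k)
    (hγ : ∀ k, (#{i | γ i = k} : ℝ) ≤ C k) :
    partitionEntropy μ T ≤
      log (Fintype.card κ) + ∑ k, μ.real ((γ ∘ T) ⁻¹' {k}) * log (C k) := by
  have hfiber (k : κ) : log #{i | γ i = k} ≤ log (C k) := by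
    rcases Nat.eq_zero_or_pos #{i | γ i = k} with h | h
    · simpa [h] using log_nonneg (hC k)
    · exact log_le_log (by exact_mod_cast h) (hγ k)
  calc partitionEntropy μ T
      = ∑ k, ∑ i with γ i = k, negMulLog (μ.real (T ⁻¹' {i})) :=
        (Finset.sum_fiberwise Finset.univ γ _).symm
    _ ≤ ∑ k, (negMulLog (μ.real ((γ ∘ T) ⁻¹' {k})) +
          μ.real ((γ ∘ T) ⁻¹' {k}) * log (C k)) := by
        gcongr with k
        rw [measureReal_preimage_comp_singleton hT]
        refine (sum_negMulLog_le _ fun _ _ => measureReal_nonneg).trans ?_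
        exact add_le_add_right
          (mul_le_mul_of_nonneg_left (hfiber k) (Finset.sum_nonneg fun _ _ => measureReal_nonneg)) _
    _ = partitionEntropy μ (γ ∘ T) + ∑ k, μ.real ((γ ∘ T) ⁻¹' {k}) * log (C k) :=
        Finset.sum_add_distrib
    _ ≤ _ := by
        gcongr
        exact partitionEntropy_le_log_card (measurableSet_preimage_comp_singleton hT γ)

end PartitionEntropy

section Dynamics

variable {X α : Type*} [MeasurableSpace X]

def itinerary (f : X → X) (P : X → α) (n : ℕ) (x : X) : Fin n → α :=
  fun i => P (f^[i] x)

theorem measurable_itinerary [MeasurableSpace α] {f : X → X} (hf : Measurable f) {P : X → α}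
    (hP : Measurable P) (n : ℕ) : Measurable (itinerary f P n) :=
  measurable_pi_lambda _ fun i => hP.comp (hf.iterate i)

theorem partitionDynEntropy_eq (μ : Measure X) (f : X → X) {m : ℕ} (P : X → Fin m) (n : ℕ) :
    partitionDynEntropy μ f P n = partitionEntropy μ (itinerary f P n) := by
  rw [partitionDynEntropy, partitionEntropy, ← Finset.sum_neg_distrib]
  refine Finset.sum_congr rfl fun w _ => ?_
  have : {x | ∀ i : Fin n, P (f^[i] x) = w i} = itinerary f P n ⁻¹' {w} := by
    ext x
    simp [itinerary, funext_iff]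
  rw [this, negMulLog, measureReal_def, neg_mul]

open Classical in
/-- Markov's inequality: by invariance, the number of visits to `A` before time `n` has mean
`n μ(A)`. -/
theorem measureReal_card_visits_gt_le {μ : Measure X} [IsFiniteMeasure μ] {f : X → X}
    (hf : MeasurePreserving f μ μ) {A : Set X} (hA : MeasurableSet A) (n s : ℕ) :
    μ.real {x | s < #{i : Fin n | f^[i] x ∈ A}} * (s + 1) ≤ n * μ.real A := by
  set G : X → ℝ≥0∞ := fun x => ∑ i : Fin n, A.indicator 1 (f^[i] x)
  have hG (x : X) : G x = #{i : Fin n | f^[i] x ∈ A} := by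
    simp [G, Set.indicator_apply, Finset.sum_boole]
  have hGm : Measurable G :=
    Finset.measurable_sum _ fun i _ => (measurable_one.indicator hA).comp (hf.measurable.iterate i)
  have hint : ∫⁻ x, G x ∂μ = n * μ A := by
    rw [lintegral_finsetSum (f := fun (i : Fin n) x => A.indicator 1 (f^[i] x)) _ fun i _ =>
      (measurable_one.indicator hA).comp (hf.measurable.iterate i)]
    calc ∑ i : Fin n, ∫⁻ x, A.indicator 1 (f^[i] x) ∂μ = ∑ _i : Fin n, μ A :=
          Finset.sum_congr rfl fun i _ => by
            rw [(hf.iterate i).lintegral_comp (measurable_one.indicator hA),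
              lintegral_indicator_one hA]
      _ = n * μ A := by simp
  have hset : {x | s < #{i : Fin n | f^[i] x ∈ A}} = {x | ((s + 1 : ℕ) : ℝ≥0∞) ≤ G x} := by
    ext x
    simp only [Set.mem_ofPred_eq, hG]
    norm_cast
  have hMarkov := mul_meas_ge_le_lintegral₀ (hGm.aemeasurable (μ := μ)) (s + 1 : ℕ)
  rw [← hset, hint] at hMarkov
  have := ENNReal.toReal_mono (by finiteness) hMarkov
  rw [ENNReal.toReal_mul, ENNReal.toReal_mul, ENNReal.toReal_natCast, ENNReal.toReal_natCast,
    mul_comm] at this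
  exact_mod_cast this

end Dynamics

section CoverMinCard

variable {X : Type*} {f : X → X} {k : ℕ} {U : Fin k → Set X}

theorem coverMinCard_spec (hU : ⋃ j, U j = univ) (n : ℕ) :
    ∃ S : Finset (Fin n → Fin k), S.card = coverMinCard f U n ∧
      univ ⊆ ⋃ w ∈ S, ⋂ i : Fin n, f^[i] ⁻¹' U (w i) := by
  refine Nat.sInf_mem (s := {c | ∃ S : Finset (Fin n → Fin k), S.card = c ∧
    univ ⊆ ⋃ w ∈ S, ⋂ i : Fin n, f^[i] ⁻¹' U (w i)}) ⟨_, Finset.univ, rfl, fun x _ => ?_⟩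
  have (i : Fin n) : ∃ j, f^[i] x ∈ U j := mem_iUnion.1 (hU ▸ mem_univ _)
  choose w hw using this
  exact mem_biUnion (Finset.mem_univ w) (mem_iInter.2 hw)

theorem one_le_coverMinCard [Nonempty X] (hU : ⋃ j, U j = univ) (n : ℕ) :
    1 ≤ coverMinCard f U n := by
  obtain ⟨S, hS, hcov⟩ := coverMinCard_spec (f := f) hU n
  obtain ⟨w, hw, -⟩ := mem_iUnion₂.1 (hcov (mem_univ (Classical.arbitrary X)))
  exact hS ▸ Finset.card_pos.2 ⟨w, hw⟩

end CoverMinCard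

namespace Goodwyn

variable {X : Type*} {m : ℕ} {P : X → Fin m} {B : Fin m → Set X}

/-- With `B₀ := (⋃ j, B j)ᶜ`, this is the cover `{B₀ ∪ B j}` (when the `B j` sit inside the
distinct cells of a partition). -/
def cover (B : Fin m → Set X) (j : Fin m) : Set X :=
  (⋃ (l) (_ : l ≠ j), B l)ᶜ

theorem isOpen_cover [TopologicalSpace X] (hB : ∀ j, IsClosed (B j)) (j : Fin m) :
    IsOpen (cover B j) :=
  (isClosed_iUnion_of_finite fun l => isClosed_iUnion_of_finite fun _ => hB l).isOpen_compl

theorem eq_of_mem_cover (hBP : ∀ j, B j ⊆ P ⁻¹' {j}) {x : X} {j : Fin m}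
    (hx : x ∈ cover B j) (hxB : x ∈ ⋃ l, B l) : P x = j := by
  obtain ⟨l, hl⟩ := mem_iUnion.1 hxB
  by_contra hne
  exact hx (mem_biUnion (x := l) (by rwa [← hBP l hl]) hl)

theorem iUnion_cover (hBP : ∀ j, B j ⊆ P ⁻¹' {j}) : ⋃ j, cover B j = univ :=
  eq_univ_of_forall fun x => mem_iUnion.2 ⟨P x, fun hx => by
    obtain ⟨l, hl, hxl⟩ := mem_iUnion₂.1 hx
    exact hl (hBP l hxl).symm⟩

open Classical in
noncomputable def refinement (P : X → Fin m) (B : Fin m → Set X) (x : X) : Fin m × Bool :=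
  (P x, decide (x ∈ ⋃ j, B j))

theorem measurable_refinement [MeasurableSpace X] (hP : Measurable P)
    (hB : ∀ j, MeasurableSet (B j)) : Measurable (refinement P B) :=
  hP.prodMk <| measurable_to_bool <| by
    convert MeasurableSet.iUnion hB
    ext
    simp

open Classical in
theorem agreesUpTo_itinerary_refinement (hBP : ∀ j, B j ⊆ P ⁻¹' {j}) {f : X → X} {n s : ℕ}
    {w : Fin n → Fin m} {x : X} (hx : x ∈ ⋂ i : Fin n, f^[i] ⁻¹' cover B (w i))
    (hs : #{i : Fin n | f^[i] x ∈ (⋃ j, B j)ᶜ} ≤ s) :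
    AgreesUpTo s w (itinerary f (refinement P B) n x) := by
  refine ⟨fun i hi => eq_of_mem_cover hBP (mem_iInter.1 hx i) ?_, ?_⟩
  · simpa [itinerary, refinement] using hi
  · convert hs using 3
    simp [itinerary, refinement]

open Classical in
theorem lt_card_of_assignAgreeing_itinerary_eq_none (hBP : ∀ j, B j ⊆ P ⁻¹' {j}) {f : X → X}
    {n s : ℕ} {S : Finset (Fin n → Fin m)}
    (hS : univ ⊆ ⋃ w ∈ S, ⋂ i : Fin n, f^[i] ⁻¹' cover B (w i))
    {x : X} (hx : assignAgreeing S s (itinerary f (refinement P B) n x) = none) :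
    s < #{i : Fin n | f^[i] x ∈ (⋃ j, B j)ᶜ} := by
  by_contra hs
  obtain ⟨w, hw, hxw⟩ := mem_iUnion₂.1 (hS (mem_univ x))
  exact assignAgreeing_ne_none hw (agreesUpTo_itinerary_refinement hBP hxw (not_lt.1 hs)) hx

variable [MeasurableSpace X] {μ : Measure X} {f : X → X}

open Classical in
/-- The cells of the `n`-th join of `refinement P B` are grouped by a word of a minimal subcover
whose cylinder they meet; only cells with more than `s` visits to `(⋃ j, B j)ᶜ` stay ungrouped. -/
theorem partitionDynEntropy_le (hf : MeasurePreserving f μ μ) [IsProbabilityMeasure μ]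
    (hP : Measurable P) (hB : ∀ j, MeasurableSet (B j)) (hBP : ∀ j, B j ⊆ P ⁻¹' {j})
    (n s : ℕ) {θ : ℝ} (hθ : 1 ≤ θ) :
    partitionDynEntropy μ f P n ≤ log (coverMinCard f (cover B) n + 1) +
      log (θ ^ s * (1 + m / θ) ^ n) +
      μ.real {x | s < #{i : Fin n | f^[i] x ∈ (⋃ j, B j)ᶜ}} * log ((2 * m) ^ n) := by
  obtain ⟨S, hS, hcov⟩ := coverMinCard_spec (f := f) (iUnion_cover hBP) n
  set T := itinerary f (refinement P B) n
  set γ := assignAgreeing S s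
  set K : ℝ := θ ^ s * (1 + m / θ) ^ n
  have hT (v : Fin n → Fin m × Bool) : MeasurableSet (T ⁻¹' {v}) :=
    measurable_itinerary hf.measurable (measurable_refinement hP hB) n (measurableSet_singleton v)
  have hK : 1 ≤ K := one_le_mul_of_one_le_of_one_le (one_le_pow₀ hθ)
    (one_le_pow₀ (le_add_of_nonneg_right (by positivity)))
  have hm : (1 : ℝ) ≤ 2 * m := by
    have := (P (nonempty_of_isProbabilityMeasure μ).some).pos
    have : (1 : ℝ) ≤ m := by exact_mod_cast this
    linarith
  set C : Option S → ℝ := fun k => k.elim ((2 * m) ^ n) fun _ => K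
  have hfiber : ∀ k, (#{v | γ v = k} : ℝ) ≤ C k := by
    rintro (_ | w)
    · refine (Nat.cast_le.2 (Finset.card_le_univ _)).trans_eq ?_
      simp [C, mul_comm]
    · simpa [C, K] using card_filter_assignAgreeing_eq_some_le S s w hθ
  have hbad : (γ ∘ T) ⁻¹' {none} ⊆ {x | s < #{i : Fin n | f^[i] x ∈ (⋃ j, B j)ᶜ}} :=
    fun _ hx => lt_card_of_assignAgreeing_itinerary_eq_none hBP hcov hx
  have hgood : ∑ w : S, μ.real ((γ ∘ T) ⁻¹' {some w}) ≤ 1 := by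
    have := sum_measureReal_preimage_singleton_eq_one (μ := μ)
      (measurableSet_preimage_comp_singleton hT γ)
    rw [Fintype.sum_option] at this
    linarith [measureReal_nonneg (μ := μ) (s := (γ ∘ T) ⁻¹' {none})]
  calc partitionDynEntropy μ f P n = partitionEntropy μ ((fun v => Prod.fst ∘ v) ∘ T) :=
        partitionDynEntropy_eq μ f P n
    _ ≤ partitionEntropy μ T := partitionEntropy_comp_le hT _
    _ ≤ log (Fintype.card (Option S)) +
          ∑ k, μ.real ((γ ∘ T) ⁻¹' {k}) * log (C k) :=
        partitionEntropy_le_of_card_fiber_le hT γ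
          (by rintro (_ | _) <;> simp [C, hK, one_le_pow₀ hm]) hfiber
    _ ≤ _ := by
        rw [Fintype.sum_option, Fintype.card_option, Fintype.card_coe, hS]
        have h1 : ∑ w : S, μ.real ((γ ∘ T) ⁻¹' {some w}) * log K ≤ log K := by
          rw [← Finset.sum_mul]
          exact mul_le_of_le_one_left (log_nonneg hK) hgood
        have h2 := mul_le_mul_of_nonneg_right (measureReal_mono (μ := μ) hbad)
          (log_nonneg (one_le_pow₀ hm (n := n)))
        push_cast
        simp only [C, Option.elim] at h1 h2 ⊢
        linarith

open Classical in
theorem partitionDynEntropy_le_of_measureReal_compl_le (hf : MeasurePreserving f μ μ)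
    [IsProbabilityMeasure μ] (hP : Measurable P) (hB : ∀ j, MeasurableSet (B j))
    (hBP : ∀ j, B j ⊆ P ⁻¹' {j}) {ε θ : ℝ} (hε : 0 < ε) (hθ : 1 ≤ θ)
    (hBε : μ.real (⋃ j, B j)ᶜ ≤ ε ^ 2) {n : ℕ} (hn : 1 ≤ n) :
    partitionDynEntropy μ f P n ≤ log (coverMinCard f (cover B) n) + log 2 +
      n * (ε * log θ + log (1 + m / θ) + ε * log (2 * m)) := by
  have : Nonempty X := nonempty_of_isProbabilityMeasure μ
  set s := ⌊ε * n⌋₊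
  set bad := {x | s < #{i : Fin n | f^[i] x ∈ (⋃ j, B j)ᶜ}}
  have hn' : (0 : ℝ) < n := by exact_mod_cast hn
  have hbad : μ.real bad ≤ ε := by
    have hM : μ.real bad * (s + 1) ≤ n * μ.real (⋃ j, B j)ᶜ := by
      convert measureReal_card_visits_gt_le hf (MeasurableSet.iUnion hB).compl n s
    have hs : ε * n < s + 1 := Nat.lt_floor_add_one _
    have : μ.real bad * (ε * n) ≤ ε * (ε * n) := by
      nlinarith [mul_le_mul_of_nonneg_left hs.le (measureReal_nonneg (μ := μ) (s := bad)),
        mul_le_mul_of_nonneg_left hBε hn'.le]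
    exact le_of_mul_le_mul_right this (by positivity)
  have hN : (1 : ℝ) ≤ coverMinCard f (cover B) n := by
    exact_mod_cast one_le_coverMinCard (iUnion_cover hBP) n
  have hlogN :
      log (coverMinCard f (cover B) n + 1) ≤ log (coverMinCard f (cover B) n) + log 2 := by
    rw [← log_mul (by positivity) two_ne_zero]
    exact log_le_log (by positivity) (by linarith)
  have hlogK : log (θ ^ s * (1 + m / θ) ^ n) ≤ n * (ε * log θ) + n * log (1 + m / θ) := by
    have hθ0 : 0 < θ := zero_lt_one.trans_le hθ
    rw [log_mul (by positivity) (by positivity), log_pow, log_pow]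
    have : (s : ℝ) ≤ ε * n := Nat.floor_le (by positivity)
    nlinarith [log_nonneg hθ]
  have hlog2m : 0 ≤ log (2 * m) := by exact_mod_cast log_natCast_nonneg (2 * m)
  have hbad' := mul_le_mul_of_nonneg_right hbad (mul_nonneg hn'.le hlog2m)
  calc partitionDynEntropy μ f P n
      ≤ log (coverMinCard f (cover B) n + 1) + log (θ ^ s * (1 + m / θ) ^ n) +
          μ.real bad * log ((2 * m) ^ n) := partitionDynEntropy_le hf hP hB hBP n s hθ
    _ ≤ _ := by
        rw [log_pow]
        nlinarith

theorem exists_isClosed_subset_measureReal_compl_le [TopologicalSpace X] [OpensMeasurableSpace X]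
    [IsFiniteMeasure μ] [μ.WeaklyRegular] (hP : Measurable P) {η : ℝ} (hη : 0 < η) :
    ∃ B : Fin m → Set X, (∀ j, IsClosed (B j)) ∧ (∀ j, B j ⊆ P ⁻¹' {j}) ∧
      μ.real (⋃ j, B j)ᶜ ≤ η := by
  have hη' : 0 < η / (m + 1) := by positivity
  choose B hBP hBc hB using fun j : Fin m =>
    (hP (measurableSet_singleton j)).exists_isClosed_sdiff_lt (measure_ne_top μ _)
      (ENNReal.ofReal_pos.2 hη').ne'
  refine ⟨B, hBc, hBP, ?_⟩
  have hsub : (⋃ j, B j)ᶜ ⊆ ⋃ j, P ⁻¹' {j} \ B j := fun x hx =>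
    mem_iUnion.2 ⟨P x, rfl, fun h => hx (mem_iUnion.2 ⟨_, h⟩)⟩
  calc μ.real (⋃ j, B j)ᶜ ≤ μ.real (⋃ j, P ⁻¹' {j} \ B j) := measureReal_mono hsub
    _ ≤ ∑ j, μ.real (P ⁻¹' {j} \ B j) := measureReal_iUnion_fintype_le _
    _ ≤ ∑ _j : Fin m, η / (m + 1) :=
        Finset.sum_le_sum fun j _ => ENNReal.toReal_le_of_le_ofReal hη'.le (hB j).le
    _ ≤ η := by
        rw [Finset.sum_const, Finset.card_univ, Fintype.card_fin, nsmul_eq_mul, ← mul_div_assoc,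
          div_le_iff₀ (by positivity)]
        nlinarith

theorem exists_error_rate_le (m : ℕ) {δ : ℝ} (hδ : 0 < δ) :
    ∃ θ : ℝ, 1 ≤ θ ∧ ∃ ε : ℝ, 0 < ε ∧ ε * log θ + log (1 + m / θ) + ε * log (2 * m) ≤ δ := by
  set θ : ℝ := 1 + 2 * m / δ
  have hθ : 1 ≤ θ := le_add_of_nonneg_right (by positivity)
  have h1 : log (1 + m / θ) ≤ δ / 2 := by
    refine (log_le_sub_one_of_pos (by positivity)).trans ?_
    rw [add_sub_cancel_left, div_le_iff₀ (by positivity)]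
    have : θ * δ = δ + 2 * m := by
      simp only [θ]
      field_simp
    nlinarith
  set L := log θ + log (2 * m)
  have hL : 0 ≤ L := add_nonneg (log_nonneg hθ) (by exact_mod_cast log_natCast_nonneg (2 * m))
  refine ⟨θ, hθ, δ / (2 * (L + 1)), by positivity, ?_⟩
  have h2 : δ / (2 * (L + 1)) * L ≤ δ / 2 := by
    rw [div_mul_eq_mul_div, div_le_div_iff₀ (by positivity) two_pos]
    nlinarith
  linarith [show δ / (2 * (L + 1)) * log θ + δ / (2 * (L + 1)) * log (2 * m) =
    δ / (2 * (L + 1)) * L by ring]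

theorem exists_isOpen_cover_eventually_le [TopologicalSpace X] [OpensMeasurableSpace X]
    [IsProbabilityMeasure μ] [μ.WeaklyRegular] (hf : MeasurePreserving f μ μ)
    (hP : Measurable P) {δ : ℝ} (hδ : 0 < δ) :
    ∃ U : Fin m → Set X, (∀ j, IsOpen (U j)) ∧ ⋃ j, U j = univ ∧
      ∀ᶠ n : ℕ in atTop, partitionDynEntropy μ f P n / n ≤ log (coverMinCard f U n) / n + δ := by
  obtain ⟨θ, hθ, ε, hε, hc⟩ := exists_error_rate_le m (half_pos hδ)
  obtain ⟨B, hBc, hBP, hBε⟩ := exists_isClosed_subset_measureReal_compl_le (μ := μ) hP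
    (pow_pos hε 2)
  refine ⟨cover B, isOpen_cover hBc, iUnion_cover hBP, ?_⟩
  filter_upwards [eventually_ge_atTop 1,
    (tendsto_const_div_atTop_nhds_zero_nat (log 2)).eventually_le_const (half_pos hδ)]
    with n hn h2
  have hn' : (0 : ℝ) < n := by exact_mod_cast hn
  have hH := partitionDynEntropy_le_of_measureReal_compl_le hf hP (fun j => (hBc j).measurableSet)
    hBP hε hθ hBε hn
  rw [div_le_iff₀ hn'] at h2
  rw [div_le_iff₀ hn', add_mul, div_mul_cancel₀ _ hn'.ne']
  nlinarith

end Goodwyn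

theorem kolmogorovSinaiEntropy_le_topEntropy {X : Type*} [TopologicalSpace X] [MeasurableSpace X]
    [OpensMeasurableSpace X] {μ : Measure X} [IsProbabilityMeasure μ] [μ.WeaklyRegular]
    {f : X → X} (hf : MeasurePreserving f μ μ) : kolmogorovSinaiEntropy μ f ≤ topEntropy f := by
  refine iSup₂_le fun m P => EReal.le_of_forall_pos_le_add fun δ hδ => ?_
  obtain ⟨U, hUo, hU, hev⟩ := Goodwyn.exists_isOpen_cover_eventually_le hf P.2 hδ
  set b : ℕ → EReal := fun n => ((log (coverMinCard f U n) / n : ℝ) : EReal)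
  calc atTop.liminf (fun n => ((partitionDynEntropy μ f P.1 n / n : ℝ) : EReal))
      ≤ atTop.liminf ((fun _ => (δ : EReal)) + b) :=
        liminf_le_liminf (hev.mono fun n hn => by
          simpa [b, add_comm, ← EReal.coe_add] using hn)
    _ ≤ δ + atTop.liminf b := by
        simpa using EReal.liminf_add_le (u := fun _ => (δ : EReal)) (v := b) (f := atTop)
          (by simp) (by simp)
    _ ≤ δ + topEntropy f := by
        gcongr
        exact le_iSup₂_of_le (f := fun k (U : {U : Fin k → Set X // _}) =>
          atTop.liminf fun n => ((log (coverMinCard f U.1 n) / n : ℝ) : EReal)) m ⟨U, hUo, hU⟩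
          le_rfl
    _ = topEntropy f + δ := add_comm _ _

theorem goodwyn_variational_inequality_general
    {X : Type*} [MetricSpace X] [MeasurableSpace X] [BorelSpace X]
    (f : Homeomorph X X) (μ : Measure X) [IsProbabilityMeasure μ]
    (hinv : MeasurePreserving f μ μ) :
    kolmogorovSinaiEntropy μ f ≤ topEntropy (f : X → X) :=
  kolmogorovSinaiEntropy_le_topEntropy hinv

/-- **Goodwyn's variational inequality.** Let `X` be a compact metric space,
`f : X → X` a homeomorphism and `μ` an `f`-invariant Borel probability measure on `X`.
Then `h_μ(f) ≤ h_top(f)`. -/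
theorem goodwyn_variational_inequality
    {X : Type*} [MetricSpace X] [CompactSpace X] [MeasurableSpace X] [BorelSpace X]
    (f : Homeomorph X X) (μ : Measure X) [IsProbabilityMeasure μ]
    (hinv : MeasurePreserving f μ μ) :
    kolmogorovSinaiEntropy μ f ≤ topEntropy (f : X → X) :=
  goodwyn_variational_inequality_general f μ hinv
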